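/- arXiv:math/0210268 — 4 statements merged into one kernel-verified Lean document; each statement's English description precedes it below -/
import Mathlib

section
/- The number of occurrences of the letter 4 in the Peano word X_n is 4^{n-1} - 2^{n-1}. -/
/-- φ1: reverse the word and apply 1↦4, 2↦1, 3↦2, 4↦3. -/
def phi1 (A : List ℕ) : List ℕ := A.reverse.map (fun x => if x = 1 then 4 else x - 1)

/-- φ2: reverse the word and apply 1↦2, 2↦3, 3↦4, 4↦1. -/
def phi2 (A : List ℕ) : List ℕ := A.reverse.map (fun x => if x = 4 then 1 else x + 1)

/-- The Peano words: `peano 1 = 123`, `peano (n+1) = φ1(Xₙ) 1 Xₙ 2 Xₙ 3 φ2(Xₙ)`. -/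
def peano : ℕ → List ℕ
  | 0 => []
  | 1 => [1, 2, 3]
  | n + 2 =>
      phi1 (peano (n + 1)) ++ [1] ++ peano (n + 1) ++ [2] ++ peano (n + 1)
        ++ [3] ++ phi2 (peano (n + 1))

/-- Number of rises of a word. -/
def rises (w : List ℕ) : ℕ := ((w.zip w.tail).filter (fun p => p.1 < p.2)).length

/-- Number of descents of a word. -/
def descents (w : List ℕ) : ℕ := ((w.zip w.tail).filter (fun p => p.2 < p.1)).length

lemma mem_peano : ∀ n, ∀ x ∈ peano n, x = 1 ∨ x = 2 ∨ x = 3 ∨ x = 4 := by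
  intro n
  induction n using Nat.strong_induction_on with
  | _ n ih =>
    match n with
    | 0 => simp [peano]
    | 1 => intro x hx; simp [peano] at hx; rcases hx with h|h|h <;> simp [h]
    | n + 2 =>
      intro x hx
      have H := ih (n+1) (by omega)
      simp only [peano, List.mem_append, List.mem_singleton, phi1, phi2, List.mem_map,
        List.mem_reverse] at hx
      rcases hx with ((((((⟨y, hy, rfl⟩|h)|h)|h)|h)|h)|⟨y, hy, rfl⟩)
      · rcases H y hy with rfl|rfl|rfl|rfl <;> simp
      · omega
      · exact H x h
      · omega
      · exact H x h
      · omega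
      · rcases H y hy with rfl|rfl|rfl|rfl <;> simp

lemma count_mapped (f : ℕ → ℕ) (A : List ℕ) (c d : ℕ)
    (hf : ∀ x ∈ A, (f x = c ↔ x = d)) :
    (A.reverse.map f).count c = A.count d := by
  rw [List.count, List.countP_map, List.countP_reverse, List.count]
  apply List.countP_congr
  intro x hx
  simp [hf x hx]

lemma peano_counts : ∀ n, 1 ≤ n →
    (peano n).count 1 = 4^(n-1) ∧ (peano n).count 2 = 4^(n-1)+2^(n-1)-1 ∧
    (peano n).count 3 = 4^(n-1) ∧ (peano n).count 4 = 4^(n-1)-2^(n-1) := by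
  intro n
  induction n with
  | zero => omega
  | succ m ih =>
    intro _
    match m, ih with
    | 0, _ => decide
    | k + 1, ih =>
      have IH := ih (by omega)
      obtain ⟨h1, h2, h3, h4⟩ := IH
      have H := mem_peano (k + 1)
      have e1 : (phi1 (peano (k+1))).count 1 = (peano (k+1)).count 2 := by
        apply count_mapped; intro x hx; rcases H x hx with rfl|rfl|rfl|rfl <;> simp
      have e2 : (phi1 (peano (k+1))).count 2 = (peano (k+1)).count 3 := by
        apply count_mapped; intro x hx; rcases H x hx with rfl|rfl|rfl|rfl <;> simp
      have e3 : (phi1 (peano (k+1))).count 3 = (peano (k+1)).count 4 := by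
        apply count_mapped; intro x hx; rcases H x hx with rfl|rfl|rfl|rfl <;> simp
      have e4 : (phi1 (peano (k+1))).count 4 = (peano (k+1)).count 1 := by
        apply count_mapped; intro x hx; rcases H x hx with rfl|rfl|rfl|rfl <;> simp
      have f1 : (phi2 (peano (k+1))).count 1 = (peano (k+1)).count 4 := by
        apply count_mapped; intro x hx; rcases H x hx with rfl|rfl|rfl|rfl <;> simp
      have f2 : (phi2 (peano (k+1))).count 2 = (peano (k+1)).count 1 := by
        apply count_mapped; intro x hx; rcases H x hx with rfl|rfl|rfl|rfl <;> simp
      have f3 : (phi2 (peano (k+1))).count 3 = (peano (k+1)).count 2 := by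
        apply count_mapped; intro x hx; rcases H x hx with rfl|rfl|rfl|rfl <;> simp
      have f4 : (phi2 (peano (k+1))).count 4 = (peano (k+1)).count 3 := by
        apply count_mapped; intro x hx; rcases H x hx with rfl|rfl|rfl|rfl <;> simp
      have hk : k + 1 - 1 = k := by omega
      have hk2 : k + 1 + 1 - 1 = k + 1 := by omega
      rw [hk] at h1 h2 h3 h4
      show (peano (k + 2)).count 1 = _ ∧ _
      simp only [peano, List.count_append, e1, e2, e3, e4, f1, f2, f3, f4,
        h1, h2, h3, h4, hk2, List.count_singleton', pow_succ]
      have hle : 2^k ≤ 4^k := Nat.pow_le_pow_left (by norm_num) k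
      have hA : 1 ≤ 4^k := Nat.one_le_pow _ _ (by norm_num)
      have hB : 1 ≤ 2^k := Nat.one_le_pow _ _ (by norm_num)
      norm_num
      omega

theorem peano_count_4 (n : ℕ) (hn : 1 ≤ n) : (peano n).count 4 = 4 ^ (n - 1) - 2 ^ (n - 1) :=
  (peano_counts n hn).2.2.2
end

section
/- Let d_n be the number of descents of the Peano word X_n. For all k ≥ 0, d_{2k+1} = (8/5)(16^k - 1), i.e. 5·d_{2k+1} = 8(16^k - 1). -/
/-!
Write `r`, `d`, `e` for the numbers of rises, descents and plateaus (equal adjacent letters) of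
a word, so that `r + d + e = |w| - 1`. Reversal exchanges rises and descents, and the cyclic
relabellings in `φ1`, `φ2` preserve the order of two letters unless one of them is the letter
that wraps around. A word enters a letter as often as it leaves it, up to its first and last
letters, so `d (φᵢ X) = r X` up to a boundary term, and hence
`d X_{n+1} = 2 (|X_n| - 1 - e X_n)` plus boundary terms, while `e X_{n+1} = 4 e X_n + c`.
Odd-indexed words run from 1 to 3 and even-indexed ones from 2 to 2, which fixes all boundary
terms: `|X_n| = 4^n - 1`, `5 e X_{2k+1} + 4 = 4 · 16^k` and
`d X_{2k+3} = 2 (|X_{2k+2}| - 1 - e X_{2k+2})`.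
-/

lemma List.countP_add_countP_eq_of_forall {α : Type*} {l : List α} {p q p' q' : α → Bool}
    (h : ∀ x ∈ l, (if p x then 1 else 0) + (if q x then 1 else 0) =
      (if p' x then 1 else 0) + (if q' x then 1 else 0)) :
    l.countP p + l.countP q = l.countP p' + l.countP q' := by
  induction l with
  | nil => rfl
  | cons a l ih =>
    have := h a List.mem_cons_self
    have := ih fun x hx => h x (List.mem_cons_of_mem a hx)
    simp only [List.countP_cons]
    omega

section AdjacentPairs

variable {α β : Type*}

def adjacentPairs (w : List α) : List (α × α) := w.zip w.tail

@[simp] lemma adjacentPairs_nil : adjacentPairs ([] : List α) = [] := rfl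

@[simp] lemma adjacentPairs_singleton (a : α) : adjacentPairs [a] = [] := rfl

@[simp] lemma adjacentPairs_cons_cons (a b : α) (w : List α) :
    adjacentPairs (a :: b :: w) = (a, b) :: adjacentPairs (b :: w) := rfl

lemma length_adjacentPairs (w : List α) : (adjacentPairs w).length = w.length - 1 := by
  simp [adjacentPairs]

lemma mem_of_mem_adjacentPairs {w : List α} {q : α × α} (hq : q ∈ adjacentPairs w) :
    q.1 ∈ w ∧ q.2 ∈ w :=
  ⟨(List.of_mem_zip hq).1, List.mem_of_mem_tail (List.of_mem_zip hq).2⟩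

lemma adjacentPairs_append (u v : List α) :
    adjacentPairs (u ++ v) =
      adjacentPairs u ++ u.getLast?.toList.zip v.head?.toList ++ adjacentPairs v := by
  induction u with
  | nil => simp
  | cons a u ih =>
    cases u with
    | nil => cases v <;> simp
    | cons b u =>
      rw [List.cons_append, List.cons_append, adjacentPairs_cons_cons, ← List.cons_append, ih]
      simp

lemma adjacentPairs_map (f : α → β) (w : List α) :
    adjacentPairs (w.map f) = (adjacentPairs w).map (Prod.map f f) := by
  simp [adjacentPairs, ← List.zip_map]

lemma adjacentPairs_reverse (w : List α) :
    adjacentPairs w.reverse = ((adjacentPairs w).map Prod.swap).reverse := by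
  induction w with
  | nil => simp
  | cons a w ih =>
    cases w with
    | nil => simp
    | cons b w =>
      rw [List.reverse_cons, adjacentPairs_append, ih]
      simp

-- Both sides count the maximal blocks of the letter `c` in `w`.
lemma countP_adjacentPairs_enter_add [DecidableEq α] (c : α) (w : List α) :
    (adjacentPairs w).countP (fun q => q.1 ≠ c ∧ q.2 = c) + (if w.head? = some c then 1 else 0) =
      (adjacentPairs w).countP (fun q => q.1 = c ∧ q.2 ≠ c) +
        (if w.getLast? = some c then 1 else 0) := by
  induction w with
  | nil => simp
  | cons a w ih =>
    cases w with
    | nil => simp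
    | cons b w =>
      simp only [adjacentPairs_cons_cons, List.countP_cons, List.head?_cons,
        List.getLast?_cons_cons] at ih ⊢
      by_cases ha : a = c <;> by_cases hb : b = c <;> simp [ha, hb] at ih ⊢ <;> omega

lemma countP_adjacentPairs_map_reverse (f : α → β) (p : β × β → Bool) (w : List α) :
    (adjacentPairs (w.reverse.map f)).countP p =
      (adjacentPairs w).countP (fun q => p (f q.2, f q.1)) := by
  rw [adjacentPairs_map, adjacentPairs_reverse, List.countP_map, List.countP_reverse,
    List.countP_map]
  rfl

end AdjacentPairs

def phi1Letter (x : ℕ) : ℕ := if x = 1 then 4 else x - 1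

def phi2Letter (x : ℕ) : ℕ := if x = 4 then 1 else x + 1

lemma phi1_eq (w : List ℕ) : phi1 w = w.reverse.map phi1Letter := rfl

lemma phi2_eq (w : List ℕ) : phi2 w = w.reverse.map phi2Letter := rfl

lemma phi1Letter_injOn : Set.InjOn phi1Letter (Finset.Icc 1 4) := by
  unfold Set.InjOn
  decide

lemma phi2Letter_injOn : Set.InjOn phi2Letter (Finset.Icc 1 4) := by
  unfold Set.InjOn
  decide

def plateaus (w : List ℕ) : ℕ := ((w.zip w.tail).filter (fun p => p.1 = p.2)).length

lemma rises_eq_countP (w : List ℕ) :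
    rises w = (adjacentPairs w).countP (fun q => q.1 < q.2) :=
  List.countP_eq_length_filter.symm

lemma descents_eq_countP (w : List ℕ) :
    descents w = (adjacentPairs w).countP (fun q => q.2 < q.1) :=
  List.countP_eq_length_filter.symm

lemma plateaus_eq_countP (w : List ℕ) :
    plateaus w = (adjacentPairs w).countP (fun q => q.1 = q.2) :=
  List.countP_eq_length_filter.symm

lemma rises_add_descents_add_plateaus (w : List ℕ) :
    rises w + descents w + plateaus w = w.length - 1 := by
  rw [rises_eq_countP, descents_eq_countP, plateaus_eq_countP, ← length_adjacentPairs]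
  induction adjacentPairs w with
  | nil => rfl
  | cons q l ih =>
    simp only [List.countP_cons, List.length_cons, decide_eq_true_eq]
    split_ifs <;> omega

lemma descents_phi1_add {w : List ℕ} (hw : ∀ x ∈ w, x ∈ Finset.Icc 1 4) :
    descents (phi1 w) + (if w.head? = some 1 then 1 else 0) =
      rises w + (if w.getLast? = some 1 then 1 else 0) := by
  have key : ∀ a ∈ Finset.Icc 1 4, ∀ b ∈ Finset.Icc 1 4,
      (if phi1Letter a < phi1Letter b then 1 else 0) + (if a = 1 ∧ b ≠ 1 then 1 else 0) =
        (if a < b then 1 else 0) + (if a ≠ 1 ∧ b = 1 then 1 else 0) := by decide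
  have hpair := List.countP_add_countP_eq_of_forall (l := adjacentPairs w)
    (p := fun q => phi1Letter q.1 < phi1Letter q.2) (q := fun q => q.1 = 1 ∧ q.2 ≠ 1)
    (p' := fun q => q.1 < q.2) (q' := fun q => q.1 ≠ 1 ∧ q.2 = 1) fun q hq => by
      have := mem_of_mem_adjacentPairs hq
      simpa using key _ (hw _ this.1) _ (hw _ this.2)
  have hblock := countP_adjacentPairs_enter_add 1 w
  rw [descents_eq_countP, phi1_eq, countP_adjacentPairs_map_reverse, rises_eq_countP]
  dsimp only
  omega

lemma descents_phi2_add {w : List ℕ} (hw : ∀ x ∈ w, x ∈ Finset.Icc 1 4) :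
    descents (phi2 w) + (if w.getLast? = some 4 then 1 else 0) =
      rises w + (if w.head? = some 4 then 1 else 0) := by
  have key : ∀ a ∈ Finset.Icc 1 4, ∀ b ∈ Finset.Icc 1 4,
      (if phi2Letter a < phi2Letter b then 1 else 0) + (if a ≠ 4 ∧ b = 4 then 1 else 0) =
        (if a < b then 1 else 0) + (if a = 4 ∧ b ≠ 4 then 1 else 0) := by decide
  have hpair := List.countP_add_countP_eq_of_forall (l := adjacentPairs w)
    (p := fun q => phi2Letter q.1 < phi2Letter q.2) (q := fun q => q.1 ≠ 4 ∧ q.2 = 4)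
    (p' := fun q => q.1 < q.2) (q' := fun q => q.1 = 4 ∧ q.2 ≠ 4) fun q hq => by
      have := mem_of_mem_adjacentPairs hq
      simpa using key _ (hw _ this.1) _ (hw _ this.2)
  have hblock := countP_adjacentPairs_enter_add 4 w
  rw [descents_eq_countP, phi2_eq, countP_adjacentPairs_map_reverse, rises_eq_countP]
  dsimp only
  omega

lemma plateaus_map_reverse {f : ℕ → ℕ} (hf : Set.InjOn f (Finset.Icc 1 4))
    {w : List ℕ} (hw : ∀ x ∈ w, x ∈ Finset.Icc 1 4) :
    plateaus (w.reverse.map f) = plateaus w := by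
  rw [plateaus_eq_countP, plateaus_eq_countP, countP_adjacentPairs_map_reverse]
  refine List.countP_congr fun q hq => ?_
  have := mem_of_mem_adjacentPairs hq
  simpa [eq_comm] using hf.eq_iff (hw _ this.2) (hw _ this.1)

def peanoStep (X : List ℕ) : List ℕ := phi1 X ++ [1] ++ X ++ [2] ++ X ++ [3] ++ phi2 X

lemma peano_add_two (n : ℕ) : peano (n + 2) = peanoStep (peano (n + 1)) := rfl

section PeanoStep

variable {X : List ℕ} {h l : ℕ}

lemma length_peanoStep : (peanoStep X).length = 4 * X.length + 3 := by
  simp [peanoStep, phi1, phi2]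
  omega

lemma head?_peanoStep (hl : X.getLast? = some l) : (peanoStep X).head? = some (phi1Letter l) := by
  simp only [peanoStep, phi1_eq, List.head?_append, List.head?_map, List.head?_reverse,
    hl, Option.map_some, Option.some_or]

lemma getLast?_peanoStep (hh : X.head? = some h) :
    (peanoStep X).getLast? = some (phi2Letter h) := by
  simp only [peanoStep, phi2_eq, List.getLast?_append, List.getLast?_map, List.getLast?_reverse,
    hh, Option.map_some, Option.some_or]

lemma mem_Icc_of_mem_peanoStep (hX : ∀ x ∈ X, x ∈ Finset.Icc 1 4) :
    ∀ x ∈ peanoStep X, x ∈ Finset.Icc 1 4 := by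
  have h1 : ∀ x ∈ Finset.Icc 1 4, phi1Letter x ∈ Finset.Icc 1 4 := by decide
  have h2 : ∀ x ∈ Finset.Icc 1 4, phi2Letter x ∈ Finset.Icc 1 4 := by decide
  simp only [peanoStep, phi1_eq, phi2_eq, List.mem_append, List.mem_map, List.mem_reverse,
    List.mem_singleton]
  rintro x ((((((⟨y, hy, rfl⟩ | rfl) | hx) | rfl) | hx) | rfl) | ⟨y, hy, rfl⟩)
  all_goals first | exact h1 y (hX y hy) | exact h2 y (hX y hy) | exact hX x hx | decide

lemma countP_adjacentPairs_peanoStep (p : ℕ × ℕ → Bool) (hh : X.head? = some h)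
    (hl : X.getLast? = some l) :
    (adjacentPairs (peanoStep X)).countP p =
      (adjacentPairs (phi1 X)).countP p + 2 * (adjacentPairs X).countP p +
        (adjacentPairs (phi2 X)).countP p +
        [(phi1Letter h, 1), (1, h), (l, 2), (2, h), (l, 3), (3, phi2Letter l)].countP p := by
  simp only [peanoStep, adjacentPairs_append, List.countP_append, List.getLast?_append, phi1_eq,
    phi2_eq, List.head?_map, List.getLast?_map, List.head?_reverse, List.getLast?_reverse, hh, hl,
    List.getLast?_singleton, List.head?_singleton, Option.map_some, Option.some_or,
    Option.toList_some, List.zip_cons_cons, List.zip_nil_left, List.countP_cons, List.countP_nil,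
    adjacentPairs_singleton]
  omega

lemma plateaus_peanoStep (hX : ∀ x ∈ X, x ∈ Finset.Icc 1 4) (hh : X.head? = some h)
    (hl : X.getLast? = some l) :
    plateaus (peanoStep X) = 4 * plateaus X +
      [(phi1Letter h, 1), (1, h), (l, 2), (2, h), (l, 3), (3, phi2Letter l)].countP
        (fun q => q.1 = q.2) := by
  have h1 : plateaus (phi1 X) = plateaus X := plateaus_map_reverse phi1Letter_injOn hX
  have h2 : plateaus (phi2 X) = plateaus X := plateaus_map_reverse phi2Letter_injOn hX
  rw [plateaus_eq_countP, countP_adjacentPairs_peanoStep _ hh hl]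
  simp only [← plateaus_eq_countP]
  omega

lemma descents_peanoStep (hX : ∀ x ∈ X, x ∈ Finset.Icc 1 4) (hh : X.head? = some h)
    (hl : X.getLast? = some l) :
    descents (peanoStep X) + (if h = 1 then 1 else 0) + (if l = 4 then 1 else 0) =
      2 * (rises X + descents X) + (if l = 1 then 1 else 0) + (if h = 4 then 1 else 0) +
        [(phi1Letter h, 1), (1, h), (l, 2), (2, h), (l, 3), (3, phi2Letter l)].countP
          (fun q => q.2 < q.1) := by
  have h1 := descents_phi1_add hX
  have h2 := descents_phi2_add hX
  rw [descents_eq_countP, countP_adjacentPairs_peanoStep _ hh hl]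
  simp only [← descents_eq_countP]
  simp only [hh, hl, Option.some.injEq] at h1 h2
  omega

end PeanoStep

lemma mem_Icc_of_mem_peano (n : ℕ) : ∀ x ∈ peano n, x ∈ Finset.Icc 1 4 := by
  induction n with
  | zero => simp [peano]
  | succ n ih =>
    cases n with
    | zero => decide
    | succ n => exact mem_Icc_of_mem_peanoStep ih

lemma length_peano (n : ℕ) : (peano n).length + 1 = 4 ^ n := by
  induction n with
  | zero => rfl
  | succ n ih =>
    cases n with
    | zero => rfl
    | succ n =>
      rw [peano_add_two, length_peanoStep, pow_succ]
      omega

lemma head?_getLast?_peano (k : ℕ) :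
    ((peano (2 * k + 1)).head? = some 1 ∧ (peano (2 * k + 1)).getLast? = some 3) ∧
      (peano (2 * k + 2)).head? = some 2 ∧ (peano (2 * k + 2)).getLast? = some 2 := by
  induction k with
  | zero => decide
  | succ k ih =>
    obtain ⟨-, hh, hl⟩ := ih
    have hodd : (peano (2 * (k + 1) + 1)).head? = some 1 ∧
        (peano (2 * (k + 1) + 1)).getLast? = some 3 :=
      ⟨head?_peanoStep hl, getLast?_peanoStep hh⟩
    exact ⟨hodd, head?_peanoStep hodd.2, getLast?_peanoStep hodd.1⟩

lemma plateaus_peano_two_mul_add_two (k : ℕ) :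
    plateaus (peano (2 * k + 2)) = 4 * plateaus (peano (2 * k + 1)) + 2 :=
  plateaus_peanoStep (mem_Icc_of_mem_peano _) (head?_getLast?_peano k).1.1
    (head?_getLast?_peano k).1.2

lemma plateaus_peano_two_mul_add_three (k : ℕ) :
    plateaus (peano (2 * k + 3)) = 4 * plateaus (peano (2 * k + 2)) + 4 :=
  plateaus_peanoStep (mem_Icc_of_mem_peano _) (head?_getLast?_peano k).2.1
    (head?_getLast?_peano k).2.2

lemma plateaus_peano_two_mul_add_one (k : ℕ) :
    5 * plateaus (peano (2 * k + 1)) + 4 = 4 * 16 ^ k := by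
  induction k with
  | zero => rfl
  | succ k ih =>
    rw [pow_succ, show 2 * (k + 1) + 1 = 2 * k + 3 by ring, plateaus_peano_two_mul_add_three,
      plateaus_peano_two_mul_add_two]
    omega

lemma descents_peano_two_mul_add_three (k : ℕ) :
    descents (peano (2 * k + 3)) =
      2 * (rises (peano (2 * k + 2)) + descents (peano (2 * k + 2))) := by
  have h := descents_peanoStep (mem_Icc_of_mem_peano _) (head?_getLast?_peano k).2.1
    (head?_getLast?_peano k).2.2
  norm_num [phi1Letter, phi2Letter] at h
  exact h

theorem peano_descents_odd (k : ℕ) :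
    5 * descents (peano (2 * k + 1)) = 8 * (16 ^ k - 1) := by
  cases k with
  | zero => rfl
  | succ k =>
    have hd := descents_peano_two_mul_add_three k
    have hsum := rises_add_descents_add_plateaus (peano (2 * k + 2))
    have hlen := length_peano (2 * k + 2)
    have heven := plateaus_peano_two_mul_add_two k
    have hodd := plateaus_peano_two_mul_add_one k
    rw [pow_add, pow_mul] at hlen
    rw [show 2 * (k + 1) + 1 = 2 * k + 3 by ring, hd, pow_succ]
    norm_num at hlen
    omega
end

section
/- Let r_n, d_n be the numbers of rises and descents of the Peano word X_n. For all n ≥ 1, r_{n+1} = 2 r_n + 2 d_n + 2 if n is odd, and r_{n+1} = 2 r_n + 2 d_n + 2 if n is even; moreover d_{n+1} = 2 r_n + 2 d_n + 2 if n is odd and d_{n+1} = 2 r_n + 2 d_n if n is even. In particular r_{n+2} = 8 r_n + 8 d_n + 10 and d_{n+2} = 8 r_n + 8 d_n + 8 for odd n. -/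
/-! ### Auxiliary machinery -/

/-- ψ: apply the cyclic shift by two, 1↦3, 2↦4, 3↦1, 4↦2 (no reversal). -/
def psi (A : List ℕ) : List ℕ := A.map (fun x => if x ≤ 2 then x + 2 else x - 2)

def cnt (p : ℕ → ℕ → Bool) (w : List ℕ) : ℕ :=
  ((w.zip w.tail).filter (fun q => p q.1 q.2)).length

lemma rises_eq_cnt (w : List ℕ) : rises w = cnt (fun a b => decide (a < b)) w := rfl
lemma descents_eq_cnt (w : List ℕ) : descents w = cnt (fun a b => decide (b < a)) w := rfl

lemma cnt_cons (p : ℕ → ℕ → Bool) (a b : ℕ) (l : List ℕ) :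
    cnt p (a :: b :: l) = (if p a b then 1 else 0) + cnt p (b :: l) := by
  simp only [cnt, List.tail_cons, List.zip_cons_cons, List.filter_cons]
  cases h : p a b <;> simp [h, Nat.add_comm]

lemma cnt_singleton (p : ℕ → ℕ → Bool) (a : ℕ) : cnt p [a] = 0 := rfl

lemma cnt_append (p : ℕ → ℕ → Bool) :
    ∀ (A : List ℕ) {B : List ℕ} {la hb : ℕ}, A.getLast? = some la → B.head? = some hb →
      cnt p (A ++ B) = cnt p A + cnt p B + (if p la hb then 1 else 0)
  | [], _, _, _, h, _ => by simp at h
  | [a], B, la, hb, h1, h2 => by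
      obtain ⟨b, t, rfl⟩ : ∃ b t, B = b :: t := by
        cases B with
        | nil => simp at h2
        | cons b t => exact ⟨b, t, rfl⟩
      simp only [List.getLast?_singleton, Option.some.injEq] at h1
      simp only [List.head?_cons, Option.some.injEq] at h2
      subst h1; subst h2
      simp [cnt_cons, cnt_singleton]
      omega
  | a :: a' :: A', B, la, hb, h1, h2 => by
      rw [List.getLast?_cons_cons] at h1
      have ih := cnt_append p (a' :: A') h1 h2
      simp only [List.cons_append] at *
      rw [cnt_cons, cnt_cons, ih]
      omega

lemma cnt_concat (p : ℕ → ℕ → Bool) (A B C D : List ℕ) (a b c la hb lb hc lc hd : ℕ)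
    (hA : A.getLast? = some la) (hBh : B.head? = some hb) (hBl : B.getLast? = some lb)
    (hCh : C.head? = some hc) (hCl : C.getLast? = some lc) (hDh : D.head? = some hd) :
    cnt p (A ++ a :: (B ++ b :: (C ++ c :: D))) =
      cnt p A + cnt p B + cnt p C + cnt p D +
        ((if p la a then 1 else 0) + (if p a hb then 1 else 0) + (if p lb b then 1 else 0) +
          (if p b hc then 1 else 0) + (if p lc c then 1 else 0) + (if p c hd then 1 else 0)) := by
  have e1 : A ++ a :: (B ++ b :: (C ++ c :: D))
      = A ++ ([a] ++ (B ++ ([b] ++ (C ++ ([c] ++ D))))) := by simp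
  rw [e1, cnt_append p A (la := la) (hb := a) hA (by simp),
    cnt_append p [a] (la := a) (hb := hb) (by simp) (by simp [hBh]),
    cnt_append p B (la := lb) (hb := b) hBl (by simp),
    cnt_append p [b] (la := b) (hb := hc) (by simp) (by simp [hCh]),
    cnt_append p C (la := lc) (hb := c) hCl (by simp),
    cnt_append p [c] (la := c) (hb := hd) (by simp) (by simp [hDh]),
    cnt_singleton, cnt_singleton, cnt_singleton]
  ring

lemma rises_concat (A B C D : List ℕ) (a b c la hb lb hc lc hd : ℕ)
    (hA : A.getLast? = some la) (hBh : B.head? = some hb) (hBl : B.getLast? = some lb)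
    (hCh : C.head? = some hc) (hCl : C.getLast? = some lc) (hDh : D.head? = some hd) :
    rises (A ++ a :: (B ++ b :: (C ++ c :: D))) =
      rises A + rises B + rises C + rises D +
        ((if la < a then 1 else 0) + (if a < hb then 1 else 0) + (if lb < b then 1 else 0) +
          (if b < hc then 1 else 0) + (if lc < c then 1 else 0) + (if c < hd then 1 else 0)) := by
  rw [rises_eq_cnt, rises_eq_cnt, rises_eq_cnt, rises_eq_cnt, rises_eq_cnt,
    cnt_concat _ A B C D a b c la hb lb hc lc hd hA hBh hBl hCh hCl hDh]
  simp

lemma descents_concat (A B C D : List ℕ) (a b c la hb lb hc lc hd : ℕ)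
    (hA : A.getLast? = some la) (hBh : B.head? = some hb) (hBl : B.getLast? = some lb)
    (hCh : C.head? = some hc) (hCl : C.getLast? = some lc) (hDh : D.head? = some hd) :
    descents (A ++ a :: (B ++ b :: (C ++ c :: D))) =
      descents A + descents B + descents C + descents D +
        ((if a < la then 1 else 0) + (if hb < a then 1 else 0) + (if b < lb then 1 else 0) +
          (if hc < b then 1 else 0) + (if c < lc then 1 else 0) + (if hd < c then 1 else 0)) := by
  rw [descents_eq_cnt, descents_eq_cnt, descents_eq_cnt, descents_eq_cnt, descents_eq_cnt,
    cnt_concat _ A B C D a b c la hb lb hc lc hd hA hBh hBl hCh hCl hDh]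
  simp

def inR (A : List ℕ) : Prop := ∀ x ∈ A, 1 ≤ x ∧ x ≤ 4

lemma phi1_append (A B : List ℕ) : phi1 (A ++ B) = phi1 B ++ phi1 A := by simp [phi1]
lemma phi2_append (A B : List ℕ) : phi2 (A ++ B) = phi2 B ++ phi2 A := by simp [phi2]
lemma psi_append (A B : List ℕ) : psi (A ++ B) = psi A ++ psi B := by simp [psi]

lemma phi1_phi2 {A : List ℕ} (h : inR A) : phi1 (phi2 A) = A := by
  simp only [phi1, phi2, List.map_reverse, List.reverse_reverse, List.map_map]
  conv_rhs => rw [← List.map_id A]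
  refine List.map_congr_left (fun x hx => ?_)
  have := h x hx
  simp only [Function.comp_apply, id]
  split_ifs <;> omega

lemma phi2_phi1 {A : List ℕ} (h : inR A) : phi2 (phi1 A) = A := by
  simp only [phi1, phi2, List.map_reverse, List.reverse_reverse, List.map_map]
  conv_rhs => rw [← List.map_id A]
  refine List.map_congr_left (fun x hx => ?_)
  have := h x hx
  simp only [Function.comp_apply, id]
  split_ifs <;> omega

lemma phi1_phi1 {A : List ℕ} (h : inR A) : phi1 (phi1 A) = psi A := by
  simp only [phi1, psi, List.map_reverse, List.reverse_reverse, List.map_map]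
  refine List.map_congr_left (fun x hx => ?_)
  have := h x hx
  simp only [Function.comp_apply]
  split_ifs <;> omega

lemma phi2_phi2 {A : List ℕ} (h : inR A) : phi2 (phi2 A) = psi A := by
  simp only [phi2, psi, List.map_reverse, List.reverse_reverse, List.map_map]
  refine List.map_congr_left (fun x hx => ?_)
  have := h x hx
  simp only [Function.comp_apply]
  split_ifs <;> omega

lemma psi_phi1 {A : List ℕ} (h : inR A) : psi (phi1 A) = phi2 A := by
  simp only [phi1, phi2, psi, List.map_map]
  refine List.map_congr_left (fun x hx => ?_)
  have := h x (List.mem_reverse.1 hx)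
  simp only [Function.comp_apply]
  split_ifs <;> omega

lemma psi_phi2 {A : List ℕ} (h : inR A) : psi (phi2 A) = phi1 A := by
  simp only [phi1, phi2, psi, List.map_map]
  refine List.map_congr_left (fun x hx => ?_)
  have := h x (List.mem_reverse.1 hx)
  simp only [Function.comp_apply]
  split_ifs <;> omega

lemma inR_phi1 {A : List ℕ} (h : inR A) : inR (phi1 A) := by
  intro x hx
  simp only [phi1, List.mem_map, List.mem_reverse] at hx
  obtain ⟨y, hy, rfl⟩ := hx
  have := h y hy
  split_ifs <;> omega

lemma inR_phi2 {A : List ℕ} (h : inR A) : inR (phi2 A) := by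
  intro x hx
  simp only [phi2, List.mem_map, List.mem_reverse] at hx
  obtain ⟨y, hy, rfl⟩ := hx
  have := h y hy
  split_ifs <;> omega

lemma head?_phi1 {A : List ℕ} {l : ℕ} (h : A.getLast? = some l) :
    (phi1 A).head? = some (if l = 1 then 4 else l - 1) := by simp [phi1, h]
lemma getLast?_phi1 {A : List ℕ} {l : ℕ} (h : A.head? = some l) :
    (phi1 A).getLast? = some (if l = 1 then 4 else l - 1) := by simp [phi1, h]
lemma head?_phi2 {A : List ℕ} {l : ℕ} (h : A.getLast? = some l) :
    (phi2 A).head? = some (if l = 4 then 1 else l + 1) := by simp [phi2, h]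
lemma getLast?_phi2 {A : List ℕ} {l : ℕ} (h : A.head? = some l) :
    (phi2 A).getLast? = some (if l = 4 then 1 else l + 1) := by simp [phi2, h]
lemma head?_psi {A : List ℕ} {l : ℕ} (h : A.head? = some l) :
    (psi A).head? = some (if l ≤ 2 then l + 2 else l - 2) := by simp [psi, h]
lemma getLast?_psi {A : List ℕ} {l : ℕ} (h : A.getLast? = some l) :
    (psi A).getLast? = some (if l ≤ 2 then l + 2 else l - 2) := by simp [psi, h]

lemma getLast?_append_of {v : ℕ} {l l' : List ℕ} (h : l'.getLast? = some v) :
    (l ++ l').getLast? = some v := by simp [h]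

lemma getLast?_cons_of {a v : ℕ} {l : List ℕ} (h : l.getLast? = some v) :
    (a :: l).getLast? = some v := by
  cases l with
  | nil => simp at h
  | cons b t => rw [List.getLast?_cons_cons]; exact h

lemma phi1_s1 : phi1 [1] = [4] := by decide
lemma phi1_s2 : phi1 [2] = [1] := by decide
lemma phi1_s3 : phi1 [3] = [2] := by decide
lemma phi2_s1 : phi2 [1] = [2] := by decide
lemma phi2_s2 : phi2 [2] = [3] := by decide
lemma phi2_s3 : phi2 [3] = [4] := by decide
lemma psi_s1 : psi [1] = [3] := by decide
lemma psi_s2 : psi [2] = [4] := by decide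
lemma psi_s3 : psi [3] = [1] := by decide

lemma peano_eq (m : ℕ) : peano (m + 2) =
    phi1 (peano (m + 1)) ++ [1] ++ peano (m + 1) ++ [2] ++ peano (m + 1)
      ++ [3] ++ phi2 (peano (m + 1)) := by
  rw [peano]

lemma inR_peano : ∀ n, inR (peano n)
  | 0 => by intro x hx; simp [peano] at hx
  | 1 => by intro x hx; simp [peano] at hx; rcases hx with h | h | h <;> omega
  | n + 2 => by
      have ih := inR_peano (n + 1)
      rw [peano_eq]
      intro x hx
      simp only [List.mem_append, List.mem_singleton] at hx
      rcases hx with ((((((h | h) | h) | h) | h) | h) | h)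
      · exact inR_phi1 ih x h
      · omega
      · exact ih x h
      · omega
      · exact ih x h
      · omega
      · exact inR_phi2 ih x h

def PeanoInv (n : ℕ) : Prop :=
  (Odd n →
    (peano n).head? = some 1 ∧ (peano n).getLast? = some 3 ∧
    rises (peano n) = descents (peano n) + 2 ∧
    rises (phi1 (peano n)) = descents (peano n) + 1 ∧
    descents (phi1 (peano n)) = descents (peano n) + 1 ∧
    rises (phi2 (peano n)) = descents (peano n) ∧
    descents (phi2 (peano n)) = descents (peano n) + 2 ∧
    rises (psi (peano n)) = descents (peano n) + 1 ∧
    descents (psi (peano n)) = descents (peano n) + 1) ∧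
  (Even n → 1 ≤ n →
    (peano n).head? = some 2 ∧ (peano n).getLast? = some 2 ∧
    descents (peano n) = rises (peano n) ∧
    rises (phi1 (peano n)) = rises (peano n) ∧
    descents (phi1 (peano n)) = rises (peano n) ∧
    rises (phi2 (peano n)) = rises (peano n) ∧
    descents (phi2 (peano n)) = rises (peano n) ∧
    rises (psi (peano n)) = rises (peano n) ∧
    descents (psi (peano n)) = rises (peano n))

lemma peanoInv_one : PeanoInv 1 := by
  constructor
  · intro _
    refine ⟨rfl, rfl, ?_⟩
    decide
  · intro h
    exact absurd h (by decide)

lemma peanoStep_s14 (n : ℕ) (hn : 1 ≤ n) (h : PeanoInv n) :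
    PeanoInv (n + 1) ∧
      rises (peano (n + 1)) = 2 * rises (peano n) + 2 * descents (peano n) + 2 ∧
      descents (peano (n + 1)) = 2 * rises (peano n) + 2 * descents (peano n) +
        (if Odd n then 2 else 0) := by
  obtain ⟨m, rfl⟩ : ∃ m, n = m + 1 := ⟨n - 1, by omega⟩
  have hR : inR (peano (m + 1)) := inR_peano _
  have d0a := peano_eq m
  have d0 : peano (m + 1 + 1) = phi1 (peano (m + 1)) ++ 1 :: (peano (m + 1) ++
      2 :: (peano (m + 1) ++ 3 :: phi2 (peano (m + 1)))) := by
    rw [show m + 1 + 1 = m + 2 from rfl, d0a]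
    simp [List.append_assoc]
  have d1 : phi1 (peano (m + 1 + 1)) = peano (m + 1) ++ 2 :: (phi1 (peano (m + 1)) ++
      1 :: (phi1 (peano (m + 1)) ++ 4 :: psi (peano (m + 1)))) := by
    rw [show m + 1 + 1 = m + 2 from rfl, d0a]
    simp only [phi1_append, List.append_assoc]
    rw [phi1_phi2 hR, phi1_phi1 hR, phi1_s1, phi1_s2, phi1_s3]
    simp [List.append_assoc]
  have d2 : phi2 (peano (m + 1 + 1)) = psi (peano (m + 1)) ++ 4 :: (phi2 (peano (m + 1)) ++
      3 :: (phi2 (peano (m + 1)) ++ 2 :: peano (m + 1))) := by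
    rw [show m + 1 + 1 = m + 2 from rfl, d0a]
    simp only [phi2_append, List.append_assoc]
    rw [phi2_phi2 hR, phi2_phi1 hR, phi2_s1, phi2_s2, phi2_s3]
    simp [List.append_assoc]
  have d3 : psi (peano (m + 1 + 1)) = phi2 (peano (m + 1)) ++ 3 :: (psi (peano (m + 1)) ++
      4 :: (psi (peano (m + 1)) ++ 1 :: phi1 (peano (m + 1)))) := by
    rw [show m + 1 + 1 = m + 2 from rfl, d0a]
    simp only [psi_append, List.append_assoc]
    rw [psi_phi1 hR, psi_phi2 hR, psi_s1, psi_s2, psi_s3]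
    simp [List.append_assoc]
  rcases Nat.even_or_odd (m + 1) with he | ho
  · -- even case
    obtain ⟨hh, hl, e0, e1, e2, e3, e4, e5, e6⟩ := h.2 he (by omega)
    have hY1h : (phi1 (peano (m + 1))).head? = some 1 := by simpa using head?_phi1 hl
    have hY1l : (phi1 (peano (m + 1))).getLast? = some 1 := by simpa using getLast?_phi1 hh
    have hY2h : (phi2 (peano (m + 1))).head? = some 3 := by simpa using head?_phi2 hl
    have hY2l : (phi2 (peano (m + 1))).getLast? = some 3 := by simpa using getLast?_phi2 hh
    have hY3h : (psi (peano (m + 1))).head? = some 4 := by simpa using head?_psi hh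
    have hY3l : (psi (peano (m + 1))).getLast? = some 4 := by simpa using getLast?_psi hl
    have c1 : rises (peano (m + 1 + 1)) = rises (phi1 (peano (m + 1))) + rises (peano (m + 1))
        + rises (peano (m + 1)) + rises (phi2 (peano (m + 1))) + 2 := by
      rw [d0, rises_concat _ _ _ _ _ _ _ 1 2 2 2 2 3 hY1l hh hl hh hl hY2h]; norm_num
    have c2 : descents (peano (m + 1 + 1)) = descents (phi1 (peano (m + 1)))
        + descents (peano (m + 1)) + descents (peano (m + 1))
        + descents (phi2 (peano (m + 1))) := by
      rw [d0, descents_concat _ _ _ _ _ _ _ 1 2 2 2 2 3 hY1l hh hl hh hl hY2h]; norm_num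
    have c3 : rises (phi1 (peano (m + 1 + 1))) = rises (peano (m + 1))
        + rises (phi1 (peano (m + 1))) + rises (phi1 (peano (m + 1)))
        + rises (psi (peano (m + 1))) + 1 := by
      rw [d1, rises_concat _ _ _ _ _ _ _ 2 1 1 1 1 4 hl hY1h hY1l hY1h hY1l hY3h]; norm_num
    have c4 : descents (phi1 (peano (m + 1 + 1))) = descents (peano (m + 1))
        + descents (phi1 (peano (m + 1))) + descents (phi1 (peano (m + 1)))
        + descents (psi (peano (m + 1))) + 1 := by
      rw [d1, descents_concat _ _ _ _ _ _ _ 2 1 1 1 1 4 hl hY1h hY1l hY1h hY1l hY3h]; norm_num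
    have c5 : rises (phi2 (peano (m + 1 + 1))) = rises (psi (peano (m + 1)))
        + rises (phi2 (peano (m + 1))) + rises (phi2 (peano (m + 1)))
        + rises (peano (m + 1)) := by
      rw [d2, rises_concat _ _ _ _ _ _ _ 4 3 3 3 3 2 hY3l hY2h hY2l hY2h hY2l hh]; norm_num
    have c6 : descents (phi2 (peano (m + 1 + 1))) = descents (psi (peano (m + 1)))
        + descents (phi2 (peano (m + 1))) + descents (phi2 (peano (m + 1)))
        + descents (peano (m + 1)) + 2 := by
      rw [d2, descents_concat _ _ _ _ _ _ _ 4 3 3 3 3 2 hY3l hY2h hY2l hY2h hY2l hh]; norm_num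
    have c7 : rises (psi (peano (m + 1 + 1))) = rises (phi2 (peano (m + 1)))
        + rises (psi (peano (m + 1))) + rises (psi (peano (m + 1)))
        + rises (phi1 (peano (m + 1))) + 1 := by
      rw [d3, rises_concat _ _ _ _ _ _ _ 3 4 4 4 4 1 hY2l hY3h hY3l hY3h hY3l hY1h]; norm_num
    have c8 : descents (psi (peano (m + 1 + 1))) = descents (phi2 (peano (m + 1)))
        + descents (psi (peano (m + 1))) + descents (psi (peano (m + 1)))
        + descents (phi1 (peano (m + 1))) + 1 := by
      rw [d3, descents_concat _ _ _ _ _ _ _ 3 4 4 4 4 1 hY2l hY3h hY3l hY3h hY3l hY1h]; norm_num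
    have hh' : (peano (m + 1 + 1)).head? = some 1 := by
      rw [d0]; simp [hY1h]
    have hl' : (peano (m + 1 + 1)).getLast? = some 3 := by
      rw [d0]
      exact getLast?_append_of (getLast?_cons_of (getLast?_append_of (getLast?_cons_of
        (getLast?_append_of (getLast?_cons_of hY2l)))))
    refine ⟨⟨fun _ => ⟨hh', hl', by omega, by omega, by omega, by omega, by omega, by omega,
      by omega⟩, fun he' _ => by exfalso; rw [Nat.even_iff] at he he'; omega⟩, by omega, ?_⟩
    have hno : ¬ Odd (m + 1) := by rw [Nat.odd_iff]; rw [Nat.even_iff] at he; omega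
    rw [if_neg hno]; omega
  · -- odd case
    obtain ⟨hh, hl, e0, e1, e2, e3, e4, e5, e6⟩ := h.1 ho
    have hY1h : (phi1 (peano (m + 1))).head? = some 2 := by simpa using head?_phi1 hl
    have hY1l : (phi1 (peano (m + 1))).getLast? = some 4 := by simpa using getLast?_phi1 hh
    have hY2h : (phi2 (peano (m + 1))).head? = some 4 := by simpa using head?_phi2 hl
    have hY2l : (phi2 (peano (m + 1))).getLast? = some 2 := by simpa using getLast?_phi2 hh
    have hY3h : (psi (peano (m + 1))).head? = some 3 := by simpa using head?_psi hh
    have hY3l : (psi (peano (m + 1))).getLast? = some 1 := by simpa using getLast?_psi hl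
    have c1 : rises (peano (m + 1 + 1)) = rises (phi1 (peano (m + 1))) + rises (peano (m + 1))
        + rises (peano (m + 1)) + rises (phi2 (peano (m + 1))) + 1 := by
      rw [d0, rises_concat _ _ _ _ _ _ _ 4 1 3 1 3 4 hY1l hh hl hh hl hY2h]; norm_num
    have c2 : descents (peano (m + 1 + 1)) = descents (phi1 (peano (m + 1)))
        + descents (peano (m + 1)) + descents (peano (m + 1))
        + descents (phi2 (peano (m + 1))) + 3 := by
      rw [d0, descents_concat _ _ _ _ _ _ _ 4 1 3 1 3 4 hY1l hh hl hh hl hY2h]; norm_num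
    have c3 : rises (phi1 (peano (m + 1 + 1))) = rises (peano (m + 1))
        + rises (phi1 (peano (m + 1))) + rises (phi1 (peano (m + 1)))
        + rises (psi (peano (m + 1))) + 1 := by
      rw [d1, rises_concat _ _ _ _ _ _ _ 3 2 4 2 4 3 hl hY1h hY1l hY1h hY1l hY3h]; norm_num
    have c4 : descents (phi1 (peano (m + 1 + 1))) = descents (peano (m + 1))
        + descents (phi1 (peano (m + 1))) + descents (phi1 (peano (m + 1)))
        + descents (psi (peano (m + 1))) + 3 := by
      rw [d1, descents_concat _ _ _ _ _ _ _ 3 2 4 2 4 3 hl hY1h hY1l hY1h hY1l hY3h]; norm_num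
    have c5 : rises (phi2 (peano (m + 1 + 1))) = rises (psi (peano (m + 1)))
        + rises (phi2 (peano (m + 1))) + rises (phi2 (peano (m + 1)))
        + rises (peano (m + 1)) + 3 := by
      rw [d2, rises_concat _ _ _ _ _ _ _ 1 4 2 4 2 1 hY3l hY2h hY2l hY2h hY2l hh]; norm_num
    have c6 : descents (phi2 (peano (m + 1 + 1))) = descents (psi (peano (m + 1)))
        + descents (phi2 (peano (m + 1))) + descents (phi2 (peano (m + 1)))
        + descents (peano (m + 1)) + 1 := by
      rw [d2, descents_concat _ _ _ _ _ _ _ 1 4 2 4 2 1 hY3l hY2h hY2l hY2h hY2l hh]; norm_num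
    have c7 : rises (psi (peano (m + 1 + 1))) = rises (phi2 (peano (m + 1)))
        + rises (psi (peano (m + 1))) + rises (psi (peano (m + 1)))
        + rises (phi1 (peano (m + 1))) + 3 := by
      rw [d3, rises_concat _ _ _ _ _ _ _ 2 3 1 3 1 2 hY2l hY3h hY3l hY3h hY3l hY1h]; norm_num
    have c8 : descents (psi (peano (m + 1 + 1))) = descents (phi2 (peano (m + 1)))
        + descents (psi (peano (m + 1))) + descents (psi (peano (m + 1)))
        + descents (phi1 (peano (m + 1))) + 1 := by
      rw [d3, descents_concat _ _ _ _ _ _ _ 2 3 1 3 1 2 hY2l hY3h hY3l hY3h hY3l hY1h]; norm_num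
    have hh' : (peano (m + 1 + 1)).head? = some 2 := by
      rw [d0]; simp [hY1h]
    have hl' : (peano (m + 1 + 1)).getLast? = some 2 := by
      rw [d0]
      exact getLast?_append_of (getLast?_cons_of (getLast?_append_of (getLast?_cons_of
        (getLast?_append_of (getLast?_cons_of hY2l)))))
    refine ⟨⟨fun ho' => ?_, fun _ _ => ⟨hh', hl', by omega, by omega, by omega, by omega,
      by omega, by omega, by omega⟩⟩, ?_, ?_⟩
    · exfalso
      rw [Nat.odd_iff] at ho ho'
      omega
    · omega
    · rw [if_pos ho]; omega

theorem peano_rises_descents_recurrence (n : ℕ) (hn : 1 ≤ n) :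
    (Odd n → rises (peano (n + 1)) = 2 * rises (peano n) + 2 * descents (peano n) + 2) ∧
    (Even n → rises (peano (n + 1)) = 2 * rises (peano n) + 2 * descents (peano n) + 2) ∧
    (Odd n → descents (peano (n + 1)) = 2 * rises (peano n) + 2 * descents (peano n) + 2) ∧
    (Even n → descents (peano (n + 1)) = 2 * rises (peano n) + 2 * descents (peano n)) ∧
    (Odd n → rises (peano (n + 2)) = 8 * rises (peano n) + 8 * descents (peano n) + 10) ∧
    (Odd n → descents (peano (n + 2)) = 8 * rises (peano n) + 8 * descents (peano n) + 8) := by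
  have inv : ∀ k, 1 ≤ k → PeanoInv k := by
    intro k hk
    induction k with
    | zero => omega
    | succ j ih =>
      by_cases hj : j = 0
      · subst hj; exact peanoInv_one
      · have hj1 : 1 ≤ j := by omega
        exact (peanoStep_s14 j hj1 (ih hj1)).1
  obtain ⟨inv1, r1, d1⟩ := peanoStep_s14 n hn (inv n hn)
  obtain ⟨_, r2, d2⟩ := peanoStep_s14 (n + 1) (by omega) inv1
  refine ⟨fun _ => r1, fun _ => r1, fun ho => ?_, fun he => ?_, fun ho => ?_, fun ho => ?_⟩
  · rw [if_pos ho] at d1; omega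
  · have hno : ¬ Odd n := by rw [Nat.odd_iff]; rw [Nat.even_iff] at he; omega
    rw [if_neg hno] at d1; omega
  · rw [if_pos ho] at d1
    rw [show n + 2 = n + 1 + 1 from rfl] at *
    omega
  · rw [if_pos ho] at d1
    have : ¬ Odd (n + 1) := by
      rw [Nat.odd_iff] at ho ⊢; omega
    rw [if_neg this] at d2
    rw [show n + 2 = n + 1 + 1 from rfl] at *
    omega
end

section
/- For every k ≥ 0 and ℓ ≥ 1, the number of occurrences of the pattern [1-2^ℓ) in the Peano word X_{2k+1} equals C(4^{2k}-2^{2k}, ℓ) + C(4^{2k}, ℓ) + C(4^{2k}+2^{2k}-1, ℓ). -/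
/-- Number of occurrences of the pattern `[1-2^ℓ)`: sets of `ℓ` positions, none of them
the first, at which the letters of `w` all coincide and are larger than the first letter. -/
def pat12Count (w : List ℕ) (ℓ : ℕ) : ℕ :=
  (Finset.univ.filter (fun s : Finset (Fin w.length) =>
    s.card = ℓ ∧ (∀ i ∈ s, 0 < (i : ℕ)) ∧ (∀ i ∈ s, ∀ j ∈ s, w.get i = w.get j) ∧
      ∀ i ∈ s, w.headI < w.get i)).card

lemma peano_succ_succ (n : ℕ) :
    peano (n + 2) = phi1 (peano (n + 1)) ++ [1] ++ peano (n + 1) ++ [2] ++ peano (n + 1)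
      ++ [3] ++ phi2 (peano (n + 1)) := rfl

lemma peano_succ_ne_nil : ∀ n, peano (n + 1) ≠ []
  | 0 => List.cons_ne_nil _ _
  | n + 1 => by simp [peano_succ_succ]

lemma head?_peano_succ_succ (n : ℕ) :
    (peano (n + 2)).head? =
      (peano (n + 1)).getLast?.map (fun x => if x = 1 then 4 else x - 1) := by
  obtain ⟨x, hx⟩ := Option.ne_none_iff_exists'.mp
    (mt List.getLast?_eq_none_iff.mp (peano_succ_ne_nil n))
  simp [peano_succ_succ, phi1, List.head?_append, hx]

lemma getLast?_peano_succ_succ (n : ℕ) :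
    (peano (n + 2)).getLast? =
      (peano (n + 1)).head?.map (fun x => if x = 4 then 1 else x + 1) := by
  obtain ⟨x, hx⟩ := Option.ne_none_iff_exists'.mp
    (mt List.head?_eq_none_iff.mp (peano_succ_ne_nil n))
  rw [peano_succ_succ, List.getLast?_append, phi2, List.getLast?_map, List.getLast?_reverse, hx]
  rfl

lemma headI_peano_odd (k : ℕ) : (peano (2 * k + 1)).headI = 1 := by
  suffices (peano (2 * k + 1)).head? = some 1 by
    obtain ⟨a, t, ht⟩ := List.exists_cons_of_ne_nil (peano_succ_ne_nil (2 * k))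
    simp_all
  induction k with
  | zero => rfl
  | succ k ih =>
    rw [show 2 * (k + 1) + 1 = 2 * k + 1 + 2 by ring, head?_peano_succ_succ,
      getLast?_peano_succ_succ, ih]
    rfl

lemma peano_letters (n : ℕ) : ∀ x ∈ peano n, 1 ≤ x ∧ x ≤ 4 := by
  cases n with
  | zero => simp [peano]
  | succ n =>
    induction n with
    | zero => decide
    | succ n ih =>
      intro x hx
      simp only [peano_succ_succ, phi1, phi2, List.mem_append, List.mem_map, List.mem_reverse,
        List.mem_singleton] at hx
      rcases hx with ((((((⟨y, hy, rfl⟩ | rfl) | hx) | rfl) | hx) | rfl) | ⟨y, hy, rfl⟩) <;>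
        first | exact ih x hx | (have := ih y hy; split_ifs <;> omega) | omega

lemma count_map_reverse {α β : Type*} [BEq β] [LawfulBEq β] [BEq α] [LawfulBEq α]
    (f : α → β) (l : List α) (a : β) (b : α) (h : ∀ x ∈ l, f x = a ↔ x = b) :
    (l.reverse.map f).count a = l.count b := by
  rw [List.count, List.countP_map, List.countP_reverse, List.count]
  exact List.countP_congr fun x hx => by simpa using h x hx

lemma count_phi1 {w : List ℕ} (hw : ∀ x ∈ w, 1 ≤ x ∧ x ≤ 4) {a : ℕ} (ha : 1 ≤ a ∧ a ≤ 4) :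
    (phi1 w).count a = w.count (if a = 4 then 1 else a + 1) :=
  count_map_reverse _ _ _ _ fun x hx => by have := hw x hx; split_ifs <;> omega

lemma count_phi2 {w : List ℕ} (hw : ∀ x ∈ w, 1 ≤ x ∧ x ≤ 4) {a : ℕ} (ha : 1 ≤ a ∧ a ≤ 4) :
    (phi2 w).count a = w.count (if a = 1 then 4 else a - 1) :=
  count_map_reverse _ _ _ _ fun x hx => by have := hw x hx; split_ifs <;> omega

lemma count_peano (n : ℕ) :
    (peano (n + 1)).count 1 = 4 ^ n ∧
    (peano (n + 1)).count 2 = 4 ^ n + 2 ^ n - 1 ∧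
    (peano (n + 1)).count 3 = 4 ^ n ∧
    (peano (n + 1)).count 4 = 4 ^ n - 2 ^ n := by
  induction n with
  | zero => decide
  | succ n ih =>
    obtain ⟨h1, h2, h3, h4⟩ := ih
    have hw := peano_letters (n + 1)
    have h2n : 1 ≤ 2 ^ n := Nat.one_le_two_pow
    have h4n : 2 ^ n ≤ 4 ^ n := Nat.pow_le_pow_left (by norm_num) n
    refine ⟨?_, ?_, ?_, ?_⟩ <;>
    · rw [peano_succ_succ]
      simp only [List.count_append, List.count_singleton]
      rw [count_phi1 hw (by norm_num), count_phi2 hw (by norm_num)]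
      norm_num [h1, h2, h3, h4, pow_succ]
      omega

def positionsOf {α : Type*} [DecidableEq α] (w : List α) (a : α) : Finset (Fin w.length) :=
  Finset.univ.filter (fun i => w.get i = a)

lemma card_positionsOf {α : Type*} [DecidableEq α] (w : List α) (a : α) :
    (positionsOf w a).card = w.count a :=
  Fin.card_filter_univ_eq_vector_get_eq_count a ⟨w, rfl⟩

lemma pairwiseDisjoint_powersetCard_positionsOf {α : Type*} [DecidableEq α] (w : List α)
    {ℓ : ℕ} (hℓ : 0 < ℓ) (S : Set α) :
    S.PairwiseDisjoint (fun a => Finset.powersetCard ℓ (positionsOf w a)) := by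
  intro a _ b _ hab
  refine Finset.disjoint_left.mpr fun s hsa hsb => ?_
  rw [Finset.mem_powersetCard] at hsa hsb
  obtain ⟨i, hi⟩ := Finset.card_pos.mp (hsa.2 ▸ hℓ)
  have ha := (Finset.mem_filter.mp (hsa.1 hi)).2
  have hb := (Finset.mem_filter.mp (hsb.1 hi)).2
  exact hab (ha ▸ hb)

lemma get_eq_headI_of_val_eq_zero {α : Type*} [Inhabited α] (w : List α) (i : Fin w.length)
    (hi : (i : ℕ) = 0) : w.get i = w.headI := by
  cases w with
  | nil => exact i.elim0
  | cons x t => obtain ⟨_, _⟩ := i; subst hi; rfl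

lemma pat12Count_eq_card_biUnion {w : List ℕ} {N ℓ : ℕ} (hN : ∀ x ∈ w, x ≤ N) (hℓ : 0 < ℓ) :
    pat12Count w ℓ =
      ((Finset.Ioc w.headI N).biUnion (fun a => Finset.powersetCard ℓ (positionsOf w a))).card := by
  rw [pat12Count]
  congr 1
  ext s
  simp only [Finset.mem_filter, Finset.mem_univ, true_and, Finset.mem_biUnion,
    Finset.mem_Ioc, Finset.mem_powersetCard, Finset.subset_iff, positionsOf]
  constructor
  · rintro ⟨hcard, -, hconst, hgt⟩
    obtain ⟨i, hi⟩ := Finset.card_pos.mp (hcard ▸ hℓ)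
    exact ⟨w.get i, ⟨hgt i hi, hN _ (w.get_mem i)⟩,
      fun j hj => by simpa using hconst j hj i hi, hcard⟩
  · rintro ⟨a, ⟨ha, -⟩, hsub, hcard⟩
    have hval (i) (hi : i ∈ s) : w.get i = a := by simpa using hsub hi
    refine ⟨hcard, fun i hi => ?_, fun i hi j hj => by rw [hval i hi, hval j hj],
      fun i hi => hval i hi ▸ ha⟩
    by_contra h0
    have := get_eq_headI_of_val_eq_zero w i (by omega)
    have := hval i hi
    omega

lemma pat12Count_eq_sum_choose_count {w : List ℕ} {N ℓ : ℕ} (hN : ∀ x ∈ w, x ≤ N) (hℓ : 0 < ℓ) :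
    pat12Count w ℓ = ∑ a ∈ Finset.Ioc w.headI N, (w.count a).choose ℓ := by
  rw [pat12Count_eq_card_biUnion hN hℓ,
    Finset.card_biUnion (pairwiseDisjoint_powersetCard_positionsOf w hℓ _)]
  simp only [Finset.card_powersetCard, card_positionsOf]

theorem peano_pat12_odd (k ℓ : ℕ) (hℓ : 1 ≤ ℓ) :
    pat12Count (peano (2 * k + 1)) ℓ =
      Nat.choose (4 ^ (2 * k) - 2 ^ (2 * k)) ℓ + Nat.choose (4 ^ (2 * k)) ℓ
        + Nat.choose (4 ^ (2 * k) + 2 ^ (2 * k) - 1) ℓ := by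
  obtain ⟨-, h2, h3, h4⟩ := count_peano (2 * k)
  rw [pat12Count_eq_sum_choose_count (fun x hx => (peano_letters _ x hx).2) hℓ,
    headI_peano_odd, show Finset.Ioc 1 4 = {2, 3, 4} by rfl,
    Finset.sum_insert (by decide), Finset.sum_pair (by decide), h2, h3, h4]
  ring
end
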